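/- arXiv:0805.2682 — 7 statements merged into one kernel-verified Lean document; each statement's English description precedes it below -/
import Mathlib

section
/- Let X be a Noetherian topological space and g : X → ℝ a function such that for every real δ the superlevel set {x ∈ X : g(x) ≥ δ} is closed in X. Then g is bounded above on X. -/
/-- If `X` is a Noetherian topological space and `g : X → ℝ` has all its superlevel
sets `{x | δ ≤ g x}` closed, then `g` is bounded above on `X`. -/
theorem stmt_0 {X : Type*} [TopologicalSpace X] [TopologicalSpace.NoetherianSpace X]
    (g : X → ℝ) (husc : ∀ δ : ℝ, IsClosed {x : X | δ ≤ g x}) :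
    ∃ M : ℝ, ∀ x : X, g x ≤ M := by
  have hopen : ∀ n : ℕ, IsOpen {x : X | g x < (n : ℝ)} := by
    intro n
    have := (husc (n : ℝ)).isOpen_compl
    convert this using 1
    ext x
    simp [not_le]
  have hcover : (Set.univ : Set X) ⊆ ⋃ n : ℕ, {x : X | g x < (n : ℝ)} := by
    intro x _
    obtain ⟨n, hn⟩ := exists_nat_gt (g x)
    exact Set.mem_iUnion.2 ⟨n, hn⟩
  obtain ⟨t, ht⟩ := (TopologicalSpace.NoetherianSpace.isCompact
    (Set.univ : Set X)).elim_finite_subcover _ hopen hcover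
  refine ⟨((t.sup id : ℕ) : ℝ), fun x => ?_⟩
  obtain ⟨n, hnt, hn⟩ := Set.mem_iUnion₂.1 (ht (Set.mem_univ x))
  exact hn.le.trans (by exact_mod_cast Finset.le_sup (f := id) hnt)
end

section
/- Let X be a Noetherian topological space and g : X → ℝ a function such that for every real δ the superlevel set {x ∈ X : g(x) ≥ δ} is closed in X. Then for every real δ there exists δ' < δ such that {x ∈ X : g(x) ≥ δ'} = {x ∈ X : g(x) ≥ δ}; in particular g takes no value in the interval [δ', δ). -/
/-!
The superlevel sets `{g ≥ t}` grow as `t` decreases, and in a Noetherian space the closed sets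
satisfy the descending chain condition, so among the sets `{g ≥ t}` with `t < δ` there is a
smallest one, `{g ≥ δ'}`. Then `{g ≥ t} = {g ≥ δ'}` for all `t ∈ [δ', δ)`; a value `g x ∈ [δ', δ)`
is impossible, since `x` would not lie in `{g ≥ t}` for any `t ∈ (g x, δ)`.
-/

open TopologicalSpace

lemma TopologicalSpace.NoetherianSpace.exists_lt_forall_mem_Ico_eq {X α : Type*}
    [TopologicalSpace X] [NoetherianSpace X] [Preorder α] {s : α → Set X} (hs : Antitone s)
    (hclosed : ∀ a, IsClosed (s a)) {a₀ b : α} (h : a₀ < b) :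
    ∃ a < b, ∀ c ∈ Set.Ico a b, s c = s a := by
  obtain ⟨a, hab, hmin⟩ :=
    exists_minimalFor_of_wellFoundedLT (· < b) (fun a ↦ (⟨s a, hclosed a⟩ : Closeds X)) ⟨a₀, h⟩
  refine ⟨a, hab, fun c ⟨hac, hcb⟩ ↦ ?_⟩
  have hca : s c ⊆ s a := hs hac
  exact hca.antisymm (hmin hcb hca)

/-- If `X` is a Noetherian topological space and `g : X → ℝ` has all its superlevel
sets closed, then for every `δ` there is `δ' < δ` with `{g ≥ δ'} = {g ≥ δ}`;
in particular `g` takes no value in `[δ', δ)`. -/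
theorem stmt_1 {X : Type*} [TopologicalSpace X] [TopologicalSpace.NoetherianSpace X]
    (g : X → ℝ) (husc : ∀ δ : ℝ, IsClosed {x : X | δ ≤ g x}) (δ : ℝ) :
    ∃ δ' : ℝ, δ' < δ ∧ {x : X | δ' ≤ g x} = {x : X | δ ≤ g x} ∧
      ∀ x : X, ¬ (δ' ≤ g x ∧ g x < δ) := by
  obtain ⟨δ', hδ', hstable⟩ := NoetherianSpace.exists_lt_forall_mem_Ico_eq
    (s := fun t ↦ {x | t ≤ g x}) (fun _ _ hts _ hx ↦ hts.trans hx) husc (sub_one_lt δ)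
  have hgap : ∀ x, ¬ (δ' ≤ g x ∧ g x < δ) := by
    rintro x ⟨hδ'x, hxδ⟩
    obtain ⟨t, hxt, htδ⟩ := exists_between hxδ
    have hx : x ∈ {x | t ≤ g x} := (hstable t ⟨hδ'x.trans hxt.le, htδ⟩).symm ▸ hδ'x
    exact hx.not_gt hxt
  refine ⟨δ', hδ', Set.ext fun x ↦ ⟨fun hx ↦ not_lt.1 fun hxδ ↦ hgap x ⟨hx, hxδ⟩,
    fun hx ↦ hδ'.le.trans hx⟩, hgap⟩
end

section
/- For every x ∈ X and every integer l ≥ 1: limsup_{n→∞} [κ_{nl}(x)]^{1/(nl)} = limsup_{n→∞} [κ_n(x)]^{1/n} and liminf_{n→∞} [κ_{nl}(x)]^{1/(nl)} = liminf_{n→∞} [κ_n(x)]^{1/n}. -/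
open Filter

section Aux

/-- An upper semicontinuous function on a Noetherian (hence compact) space is
bounded above. -/
private lemma usc_bdd_aux {X : Type*} [TopologicalSpace X]
    [TopologicalSpace.NoetherianSpace X]
    (g : X → ℝ) (hg : ∀ δ : ℝ, IsClosed {x : X | δ ≤ g x}) : ∃ C : ℝ, ∀ y, g y ≤ C := by
  by_contra h
  push_neg at h
  have hne : ∀ k : ℕ, {x : X | (k : ℝ) ≤ g x}.Nonempty := fun k => by
    obtain ⟨y, hy⟩ := h k
    exact ⟨y, le_of_lt hy⟩
  have hdir : Directed (· ⊇ ·) (fun k : ℕ => {x : X | (k : ℝ) ≤ g x}) := by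
    intro i j
    refine ⟨max i j, fun x hx => ?_, fun x hx => ?_⟩
    · have h1 : ((i : ℝ)) ≤ ((max i j : ℕ) : ℝ) := by exact_mod_cast Nat.le_max_left i j
      exact Set.mem_setOf_eq ▸ le_trans h1 hx
    · have h1 : ((j : ℝ)) ≤ ((max i j : ℕ) : ℝ) := by exact_mod_cast Nat.le_max_right i j
      exact Set.mem_setOf_eq ▸ le_trans h1 hx
  obtain ⟨y, hy⟩ := IsCompact.nonempty_iInter_of_directed_nonempty_isCompact_isClosed
    _ hdir hne (fun k => TopologicalSpace.NoetherianSpace.isCompact _) (fun k => hg _)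
  obtain ⟨k, hk⟩ := exists_nat_gt (g y)
  exact absurd (Set.mem_iInter.1 hy k) (not_le.2 hk)

private lemma limsup_mul_const_aux {v : ℕ → ℝ} {c M : ℝ} (hc : 0 < c)
    (h1 : ∀ n, 1 ≤ v n) (hM : ∀ n, v n ≤ M) :
    limsup (fun n => v n * c) atTop = limsup v atTop * c := by
  have hbv : atTop.IsBoundedUnder (· ≤ ·) v := isBoundedUnder_of ⟨M, hM⟩
  have hcv : atTop.IsCoboundedUnder (· ≤ ·) v :=
    (isBoundedUnder_of ⟨1, h1⟩ : atTop.IsBoundedUnder (· ≥ ·) v).isCoboundedUnder_le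
  have hbv' : atTop.IsBoundedUnder (· ≤ ·) (fun n => v n * c) :=
    isBoundedUnder_of ⟨M * c, fun n => mul_le_mul_of_nonneg_right (hM n) hc.le⟩
  have hcv' : atTop.IsCoboundedUnder (· ≤ ·) (fun n => v n * c) :=
    (isBoundedUnder_of ⟨c, fun n => by nlinarith [h1 n]⟩ :
      atTop.IsBoundedUnder (· ≥ ·) (fun n => v n * c)).isCoboundedUnder_le
  exact ((OrderIso.mulRight₀ c hc).limsup_apply hbv hcv hbv' hcv').symm

private lemma liminf_mul_const_aux {v : ℕ → ℝ} {c M : ℝ} (hc : 0 < c)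
    (h1 : ∀ n, 1 ≤ v n) (hM : ∀ n, v n ≤ M) :
    liminf (fun n => v n * c) atTop = liminf v atTop * c := by
  have hbv : atTop.IsBoundedUnder (· ≥ ·) v := isBoundedUnder_of ⟨1, h1⟩
  have hcv : atTop.IsCoboundedUnder (· ≥ ·) v :=
    (isBoundedUnder_of ⟨M, hM⟩ : atTop.IsBoundedUnder (· ≤ ·) v).isCoboundedUnder_ge
  have hbv' : atTop.IsBoundedUnder (· ≥ ·) (fun n => v n * c) :=
    isBoundedUnder_of ⟨c, fun n => by nlinarith [h1 n]⟩
  have hcv' : atTop.IsCoboundedUnder (· ≥ ·) (fun n => v n * c) :=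
    (isBoundedUnder_of ⟨M * c, fun n => mul_le_mul_of_nonneg_right (hM n) hc.le⟩ :
      atTop.IsBoundedUnder (· ≤ ·) (fun n => v n * c)).isCoboundedUnder_ge
  exact ((OrderIso.mulRight₀ c hc).liminf_apply hbv hcv hbv' hcv').symm

/-- The key epsilon argument: if `u n ≤ v n * e n` eventually, with `e → 1` and
`u, v` taking values in `[1, M]`, then the limsup and liminf of `u` are at most
those of `v`. -/
private lemma limsup_liminf_le_aux {u v e : ℕ → ℝ} {M : ℝ}
    (hu1 : ∀ n, 1 ≤ u n) (huM : ∀ n, u n ≤ M)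
    (hv1 : ∀ n, 1 ≤ v n) (hvM : ∀ n, v n ≤ M)
    (he : Tendsto e atTop (nhds 1))
    (h : ∀ᶠ n in atTop, u n ≤ v n * e n) :
    limsup u atTop ≤ limsup v atTop ∧ liminf u atTop ≤ liminf v atTop := by
  have hM1 : (1 : ℝ) ≤ M := le_trans (hu1 0) (huM 0)
  have hM0 : (0 : ℝ) < M := lt_of_lt_of_le one_pos hM1
  have hbu_le : atTop.IsBoundedUnder (· ≤ ·) u := isBoundedUnder_of ⟨M, huM⟩
  have hbu_ge : atTop.IsBoundedUnder (· ≥ ·) u := isBoundedUnder_of ⟨1, hu1⟩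
  have hbv_le : atTop.IsBoundedUnder (· ≤ ·) v := isBoundedUnder_of ⟨M, hvM⟩
  have hbv_ge : atTop.IsBoundedUnder (· ≥ ·) v := isBoundedUnder_of ⟨1, hv1⟩
  -- for every ε > 0, the estimate with (1 + ε)
  have key : ∀ ε : ℝ, 0 < ε → (limsup u atTop ≤ limsup v atTop * (1 + ε) ∧
      liminf u atTop ≤ liminf v atTop * (1 + ε)) := by
    intro ε hε
    have hc : (0 : ℝ) < 1 + ε := by linarith
    have hee : ∀ᶠ n in atTop, e n ≤ 1 + ε :=
      he.eventually (eventually_le_nhds (by linarith))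
    have h' : ∀ᶠ n in atTop, u n ≤ v n * (1 + ε) := by
      filter_upwards [h, hee] with n h1 h2
      have : v n * e n ≤ v n * (1 + ε) :=
        mul_le_mul_of_nonneg_left h2 (le_trans zero_le_one (hv1 n))
      linarith
    constructor
    · have h1 : limsup u atTop ≤ limsup (fun n => v n * (1 + ε)) atTop :=
        limsup_le_limsup h' hbu_ge.isCoboundedUnder_le
          (isBoundedUnder_of ⟨M * (1 + ε), fun n =>
            mul_le_mul_of_nonneg_right (hvM n) hc.le⟩)
      rwa [limsup_mul_const_aux hc hv1 hvM] at h1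
    · have h1 : liminf u atTop ≤ liminf (fun n => v n * (1 + ε)) atTop :=
        liminf_le_liminf h' hbu_ge
          ((isBoundedUnder_of ⟨M * (1 + ε), fun n =>
            mul_le_mul_of_nonneg_right (hvM n) hc.le⟩ :
              atTop.IsBoundedUnder (· ≤ ·) _).isCoboundedUnder_ge)
      rwa [liminf_mul_const_aux hc hv1 hvM] at h1
  have hLv_le : limsup v atTop ≤ M :=
    limsup_le_of_le hbv_ge.isCoboundedUnder_le (Eventually.of_forall hvM)
  have hLv_ge : (0 : ℝ) ≤ limsup v atTop := by
    have := le_limsup_of_frequently_le (Frequently.of_forall hv1) hbv_le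
    linarith
  have hlv_le : liminf v atTop ≤ M :=
    liminf_le_of_frequently_le (Frequently.of_forall hvM) hbv_ge
  have hlv_ge : (0 : ℝ) ≤ liminf v atTop := by
    have := le_liminf_of_le hbv_le.isCoboundedUnder_ge (Eventually.of_forall hv1)
    linarith
  constructor
  · refine le_of_forall_pos_le_add fun ε hε => ?_
    have h1 := (key (ε / M) (by positivity)).1
    have : limsup v atTop * (ε / M) ≤ M * (ε / M) :=
      mul_le_mul_of_nonneg_right hLv_le (by positivity)
    have hMε : M * (ε / M) = ε := by field_simp
    nlinarith
  · refine le_of_forall_pos_le_add fun ε hε => ?_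
    have h1 := (key (ε / M) (by positivity)).2
    have : liminf v atTop * (ε / M) ≤ M * (ε / M) :=
      mul_le_mul_of_nonneg_right hlv_le (by positivity)
    have hMε : M * (ε / M) = ε := by field_simp
    nlinarith

end Aux

/-- For a sub-multiplicative cocycle, the limsup and liminf of `[κ_n(x)]^{1/n}`
can be computed along the subsequence of multiples of any `l ≥ 1`. -/
theorem stmt_4 {X : Type*} [TopologicalSpace X] [Nonempty X]
    [TopologicalSpace.NoetherianSpace X] [IrreducibleSpace X]
    (f : X → X) (hf_cont : Continuous f) (hf_open : IsOpenMap f)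
    (hf_closed : IsClosedMap f) (hf_surj : Function.Surjective f)
    (κ : ℕ → X → ℝ)
    (hκ1 : ∀ n x, 1 ≤ κ n x)
    (hκmin : ∀ n, ∃ x, κ n x = 1)
    (hκusc : ∀ n (δ : ℝ), IsClosed {x : X | δ ≤ κ n x})
    (hκsub : ∀ n m x, κ (n + m) x ≤ κ n x * κ m (f^[n] x))
    (x : X) (l : ℕ) (hl : 1 ≤ l) :
    limsup (fun n : ℕ => (κ (n * l) x) ^ (1 / (n * l : ℝ))) atTop =
      limsup (fun n : ℕ => (κ n x) ^ (1 / (n : ℝ))) atTop ∧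
    liminf (fun n : ℕ => (κ (n * l) x) ^ (1 / (n * l : ℝ))) atTop =
      liminf (fun n : ℕ => (κ n x) ^ (1 / (n : ℝ))) atTop := by
  have hl0 : 0 < l := hl
  -- a uniform bound on κ
  obtain ⟨C0, hC0b⟩ := usc_bdd_aux (κ 0) (hκusc 0)
  obtain ⟨C1, hC1b⟩ := usc_bdd_aux (κ 1) (hκusc 1)
  set C : ℝ := max 1 (max C0 C1) with hC_def
  have hC1 : (1 : ℝ) ≤ C := le_max_left _ _
  have hC0 : (0 : ℝ) < C := lt_of_lt_of_le one_pos hC1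
  have hCb : ∀ m y, κ m y ≤ C ^ (m + 1) := by
    intro m
    induction m with
    | zero =>
      intro y
      have h1 : κ 0 y ≤ C0 := hC0b y
      have h2 : C0 ≤ C := le_trans (le_max_left C0 C1) (le_max_right 1 _)
      simpa using le_trans h1 h2
    | succ m ih =>
      intro y
      have h1 : κ (m + 1) y ≤ κ m y * κ 1 (f^[m] y) := hκsub m 1 y
      have h2 : κ 1 (f^[m] y) ≤ C :=
        le_trans (hC1b _) (le_trans (le_max_right _ _) (le_max_right _ _))
      calc κ (m + 1) y ≤ κ m y * κ 1 (f^[m] y) := h1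
        _ ≤ C ^ (m + 1) * C := by
            apply mul_le_mul (ih y) h2 (le_trans zero_le_one (hκ1 _ _))
            positivity
        _ = C ^ (m + 1 + 1) := by ring
  -- the sequence
  set a : ℕ → ℝ := fun n => κ n x ^ (1 / (n : ℝ)) with ha_def
  have ha1 : ∀ n, 1 ≤ a n := fun n => Real.one_le_rpow (hκ1 n x) (by positivity)
  set M : ℝ := C ^ 2 with hM_def
  have hM1 : (1 : ℝ) ≤ M := one_le_pow₀ hC1
  have haM : ∀ n, a n ≤ M := by
    intro n
    rcases Nat.eq_zero_or_pos n with hn | hn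
    · subst hn
      have h0 : a 0 = 1 := by simp [ha_def]
      rw [h0]; exact hM1
    · have h1 : a n ≤ ((C ^ (n + 1) : ℝ)) ^ (1 / (n : ℝ)) :=
        Real.rpow_le_rpow (le_trans zero_le_one (hκ1 n x)) (hCb n x) (by positivity)
      have h2 : ((C ^ (n + 1) : ℝ)) ^ (1 / (n : ℝ)) = C ^ (((n : ℝ) + 1) * (1 / (n : ℝ))) := by
        rw [← Real.rpow_natCast C (n + 1), ← Real.rpow_mul hC0.le]
        push_cast
        ring_nf
      have h3 : ((n : ℝ) + 1) * (1 / (n : ℝ)) ≤ 2 := by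
        have hn' : (1 : ℝ) ≤ (n : ℝ) := by exact_mod_cast hn
        rw [mul_one_div, div_le_iff₀ (by linarith)]
        linarith
      have h4 : C ^ (((n : ℝ) + 1) * (1 / (n : ℝ))) ≤ C ^ (2 : ℝ) :=
        Real.rpow_le_rpow_of_exponent_le hC1 h3
      have h5 : C ^ (2 : ℝ) = M := by
        rw [hM_def, ← Real.rpow_natCast C 2]
        norm_num
      calc a n ≤ _ := h1
        _ = _ := h2
        _ ≤ _ := h4
        _ = M := h5
  -- error factor
  set e : ℕ → ℝ := fun n => C ^ (((l : ℝ) + 1) / (n : ℝ)) with he_def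
  have he : Tendsto e atTop (nhds 1) := by
    have h1 : Tendsto (fun n : ℕ => ((l : ℝ) + 1) / (n : ℝ)) atTop (nhds 0) :=
      tendsto_const_div_atTop_nhds_zero_nat _
    have h2 : ContinuousAt (fun t : ℝ => C ^ t) 0 := Real.continuousAt_const_rpow hC0.ne'
    have h3 := h2.tendsto.comp h1
    rwa [Real.rpow_zero] at h3
  -- generic bound: κ (p + m) x ≤ κ p x * C^(l+1) when m ≤ l
  have hstep : ∀ p m : ℕ, m ≤ l → κ (p + m) x ≤ κ p x * C ^ (l + 1) := by
    intro p m hm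
    calc κ (p + m) x ≤ κ p x * κ m (f^[p] x) := hκsub p m x
      _ ≤ κ p x * C ^ (m + 1) := by
          apply mul_le_mul_of_nonneg_left (hCb m _) (le_trans zero_le_one (hκ1 _ _))
      _ ≤ κ p x * C ^ (l + 1) := by
          apply mul_le_mul_of_nonneg_left (pow_le_pow_right₀ hC1 (by omega))
            (le_trans zero_le_one (hκ1 _ _))
  -- key inequality 1 : a n ≤ a ((n/l)*l) * e n  for n ≥ l
  have key1 : ∀ n : ℕ, l ≤ n → a n ≤ a (n / l * l) * e n := by
    intro n hn
    have hn1 : 1 ≤ n := le_trans hl hn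
    have hnR : (0 : ℝ) < (n : ℝ) := by exact_mod_cast hn1
    have hql : n / l * l ≤ n := Nat.div_mul_le_self n l
    have hq1 : 1 ≤ n / l := (Nat.one_le_div_iff hl0).2 hn
    have hql1 : 1 ≤ n / l * l := Nat.one_le_of_lt (Nat.lt_of_lt_of_le hl0
      (Nat.le_mul_of_pos_left l hq1)) |>.trans_eq rfl
    have hqlR : (0 : ℝ) < ((n / l * l : ℕ) : ℝ) := by exact_mod_cast hql1
    have hmod : n / l * l + n % l = n := by
      rw [Nat.mul_comm]; exact Nat.div_add_mod n l
    have hml : n % l ≤ l := le_of_lt (Nat.mod_lt n hl0)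
    have h1 : κ n x ≤ κ (n / l * l) x * C ^ (l + 1) := by
      have := hstep (n / l * l) (n % l) hml
      rwa [hmod] at this
    have h2 : a n ≤ (κ (n / l * l) x * C ^ (l + 1)) ^ (1 / (n : ℝ)) :=
      Real.rpow_le_rpow (le_trans zero_le_one (hκ1 n x)) h1 (by positivity)
    have h3 : (κ (n / l * l) x * C ^ (l + 1)) ^ (1 / (n : ℝ)) =
        κ (n / l * l) x ^ (1 / (n : ℝ)) * ((C ^ (l + 1) : ℝ)) ^ (1 / (n : ℝ)) :=
      Real.mul_rpow (le_trans zero_le_one (hκ1 _ _)) (by positivity)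
    have h4 : κ (n / l * l) x ^ (1 / (n : ℝ)) ≤ a (n / l * l) := by
      apply Real.rpow_le_rpow_of_exponent_le (hκ1 _ _)
      apply one_div_le_one_div_of_le hqlR
      exact_mod_cast hql
    have h5 : ((C ^ (l + 1) : ℝ)) ^ (1 / (n : ℝ)) = e n := by
      rw [he_def, ← Real.rpow_natCast C (l + 1), ← Real.rpow_mul hC0.le]
      push_cast
      ring_nf
    calc a n ≤ _ := h2
      _ = _ := h3
      _ ≤ a (n / l * l) * e n := by
          apply mul_le_mul h4 (le_of_eq h5) (by positivity)
          exact le_trans zero_le_one (ha1 _)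
      _ = a (n / l * l) * e n := rfl
  -- key inequality 2 : a ((n/l+1)*l) ≤ a n * e n  for n ≥ 1
  have key2 : ∀ n : ℕ, 1 ≤ n → a ((n / l + 1) * l) ≤ a n * e n := by
    intro n hn1
    have hnR : (0 : ℝ) < (n : ℝ) := by exact_mod_cast hn1
    have hlt : n < (n / l + 1) * l := by
      calc n = n / l * l + n % l := by rw [Nat.mul_comm]; exact (Nat.div_add_mod n l).symm
        _ < n / l * l + l := Nat.add_lt_add_left (Nat.mod_lt n hl0) _
        _ = (n / l + 1) * l := by ring
    have hle : (n / l + 1) * l ≤ n + l := by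
      have h1 : (n / l + 1) * l = n / l * l + l := by ring
      have h2 : n / l * l ≤ n := Nat.div_mul_le_self n l
      omega
    have hqlR : (0 : ℝ) < (((n / l + 1) * l : ℕ) : ℝ) := by
      have : 0 < (n / l + 1) * l := by positivity
      exact_mod_cast this
    have hm : (n / l + 1) * l - n ≤ l := by omega
    have h1 : κ ((n / l + 1) * l) x ≤ κ n x * C ^ (l + 1) := by
      have := hstep n ((n / l + 1) * l - n) hm
      rwa [show n + ((n / l + 1) * l - n) = (n / l + 1) * l by omega] at this
    have h2 : a ((n / l + 1) * l) ≤ (κ n x * C ^ (l + 1)) ^ (1 / ((((n / l + 1) * l : ℕ)) : ℝ)) :=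
      Real.rpow_le_rpow (le_trans zero_le_one (hκ1 _ x)) h1 (by positivity)
    have h3 : (κ n x * C ^ (l + 1)) ^ (1 / ((((n / l + 1) * l : ℕ)) : ℝ)) =
        κ n x ^ (1 / ((((n / l + 1) * l : ℕ)) : ℝ)) *
          ((C ^ (l + 1) : ℝ)) ^ (1 / ((((n / l + 1) * l : ℕ)) : ℝ)) :=
      Real.mul_rpow (le_trans zero_le_one (hκ1 _ _)) (by positivity)
    have h4 : κ n x ^ (1 / ((((n / l + 1) * l : ℕ)) : ℝ)) ≤ a n := by
      apply Real.rpow_le_rpow_of_exponent_le (hκ1 _ _)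
      apply one_div_le_one_div_of_le hnR
      exact_mod_cast hlt.le
    have h5a : ((C ^ (l + 1) : ℝ)) ^ (1 / ((((n / l + 1) * l : ℕ)) : ℝ)) =
        C ^ (((l : ℝ) + 1) / ((((n / l + 1) * l : ℕ)) : ℝ)) := by
      rw [← Real.rpow_natCast C (l + 1), ← Real.rpow_mul hC0.le]
      push_cast
      ring_nf
    have h5b : C ^ (((l : ℝ) + 1) / ((((n / l + 1) * l : ℕ)) : ℝ)) ≤ e n := by
      apply Real.rpow_le_rpow_of_exponent_le hC1
      gcongr
    have h5 : ((C ^ (l + 1) : ℝ)) ^ (1 / ((((n / l + 1) * l : ℕ)) : ℝ)) ≤ e n := h5a ▸ h5b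
    calc a ((n / l + 1) * l) ≤ _ := h2
      _ = _ := h3
      _ ≤ a n * e n :=
          mul_le_mul h4 h5 (by positivity) (le_trans zero_le_one (ha1 _))
  -- identify the subsequence with a composition
  have hb_eq : (fun n : ℕ => (κ (n * l) x) ^ (1 / (n * l : ℝ))) = a ∘ (fun n : ℕ => n * l) := by
    funext n
    simp only [ha_def, Function.comp_apply, Nat.cast_mul]
  -- filters
  have hmapl : map (fun n : ℕ => n * l) atTop ≤ atTop := by
    apply Filter.tendsto_atTop_atTop.2
    exact fun b => ⟨b, fun n hn => le_trans hn (Nat.le_mul_of_pos_right n hl0)⟩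
  have hmapg : map (fun n : ℕ => n / l) atTop = atTop := Filter.map_div_atTop_eq_nat l hl0
  have hmaph : map (fun n : ℕ => n / l + 1) atTop = atTop := by
    have : (fun n : ℕ => n / l + 1) = (fun m : ℕ => m + 1) ∘ (fun n : ℕ => n / l) := rfl
    rw [this, ← Filter.map_map, hmapg, Filter.map_add_atTop_eq_nat]
  -- boundedness facts
  have hbnd : ∀ (F : Filter ℕ) (g : ℕ → ℕ), (map g F).IsBoundedUnder (· ≤ ·) a :=
    fun F g => isBoundedUnder_of ⟨M, fun n => haM n⟩
  have hcob : ∀ (g : ℕ → ℕ), (map g atTop).IsCoboundedUnder (· ≤ ·) a := by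
    intro g
    exact (isBoundedUnder_of ⟨1, fun n => ha1 n⟩ :
      (map g atTop).IsBoundedUnder (· ≥ ·) a).isCoboundedUnder_le
  have hcob' : ∀ (g : ℕ → ℕ), (map g atTop).IsCoboundedUnder (· ≥ ·) a := by
    intro g
    exact (isBoundedUnder_of ⟨M, fun n => haM n⟩ :
      (map g atTop).IsBoundedUnder (· ≤ ·) a).isCoboundedUnder_ge
  have hbnd' : ∀ (g : ℕ → ℕ), (map g atTop).IsBoundedUnder (· ≥ ·) a :=
    fun g => isBoundedUnder_of ⟨1, fun n => ha1 n⟩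
  rw [hb_eq]
  constructor
  · -- limsup
    apply le_antisymm
    · rw [limsup_comp]
      exact limsup_le_limsup_of_le hmapl (hcob _) (isBoundedUnder_of ⟨M, fun n => haM n⟩)
    · -- limsup a ≤ limsup (a ∘ (·*l))
      have hev : ∀ᶠ n in atTop, a n ≤ (fun n => a (n / l * l)) n * e n :=
        eventually_atTop.2 ⟨l, key1⟩
      have h := (limsup_liminf_le_aux ha1 haM (fun n => ha1 _) (fun n => haM _) he hev).1
      have heq : limsup (fun n : ℕ => a (n / l * l)) atTop =
          limsup (a ∘ fun n : ℕ => n * l) atTop := by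
        have : (fun n : ℕ => a (n / l * l)) = (a ∘ fun n : ℕ => n * l) ∘ (fun n : ℕ => n / l) :=
          rfl
        rw [this, limsup_comp, hmapg]
      rw [heq] at h
      exact h
  · -- liminf
    apply le_antisymm
    · -- liminf (a ∘ (·*l)) ≤ liminf a
      have hev : ∀ᶠ n in atTop, (fun n => a ((n / l + 1) * l)) n ≤ a n * e n :=
        eventually_atTop.2 ⟨1, key2⟩
      have h := (limsup_liminf_le_aux (fun n => ha1 _) (fun n => haM _) ha1 haM he hev).2
      have heq : liminf (fun n : ℕ => a ((n / l + 1) * l)) atTop =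
          liminf (a ∘ fun n : ℕ => n * l) atTop := by
        have : (fun n : ℕ => a ((n / l + 1) * l)) =
            (a ∘ fun n : ℕ => n * l) ∘ (fun n : ℕ => n / l + 1) := rfl
        rw [this, liminf_comp, hmaph]
      rw [heq] at h
      exact h
    · rw [liminf_comp]
      exact liminf_le_liminf_of_le hmapl (isBoundedUnder_of ⟨1, fun n => ha1 n⟩) (hcob' _)
end

section
/- For every x ∈ X and every integer l ≥ 1: limsup_{n→∞} [κ_{-nl}(x)]^{1/(nl)} = limsup_{n→∞} [κ_{-n}(x)]^{1/n} and liminf_{n→∞} [κ_{-nl}(x)]^{1/(nl)} = liminf_{n→∞} [κ_{-n}(x)]^{1/n}. -/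
open Filter Topology

/-- For the negative-time cocycle `κ₋ₙ(x) = max_{y ∈ f^[n]⁻¹(x)} κₙ(y)`, the limsup
and liminf of `[κ₋ₙ(x)]^{1/n}` can be computed along multiples of any `l ≥ 1`. -/
theorem stmt_5 {X : Type*} [TopologicalSpace X] [Nonempty X]
    [TopologicalSpace.NoetherianSpace X] [IrreducibleSpace X]
    (f : X → X) (hf_cont : Continuous f) (hf_open : IsOpenMap f)
    (hf_closed : IsClosedMap f) (hf_surj : Function.Surjective f)
    (κ : ℕ → X → ℝ)
    (hκ1 : ∀ n x, 1 ≤ κ n x)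
    (hκmin : ∀ n, ∃ x, κ n x = 1)
    (hκusc : ∀ n (δ : ℝ), IsClosed {x : X | δ ≤ κ n x})
    (hκsub : ∀ n m x, κ (n + m) x ≤ κ n x * κ m (f^[n] x))
    (κneg : ℕ → X → ℝ)
    (hκneg : ∀ n x, IsGreatest (κ n '' (f^[n] ⁻¹' {x})) (κneg n x))
    (x : X) (l : ℕ) (hl : 1 ≤ l) :
    limsup (fun n : ℕ => (κneg (n * l) x) ^ (1 / (n * l : ℝ))) atTop =
      limsup (fun n : ℕ => (κneg n x) ^ (1 / (n : ℝ))) atTop ∧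
    liminf (fun n : ℕ => (κneg (n * l) x) ^ (1 / (n * l : ℝ))) atTop =
      liminf (fun n : ℕ => (κneg n x) ^ (1 / (n : ℝ))) atTop := by
  classical
  have hlpos : 0 < l := hl
  -- basic facts about κneg
  have hneg_mem : ∀ n (x' : X), ∃ y, f^[n] y = x' ∧ κ n y = κneg n x' := by
    intro n x'
    obtain ⟨y, hy, hval⟩ := (hκneg n x').1
    exact ⟨y, hy, hval⟩
  have hneg_ub : ∀ n (x' : X) (y : X), f^[n] y = x' → κ n y ≤ κneg n x' := by
    intro n x' y h
    exact (hκneg n x').2 ⟨y, by simp [h], rfl⟩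
  have hneg_ge1 : ∀ n (x' : X), 1 ≤ κneg n x' := by
    intro n x'
    obtain ⟨y, -, hval⟩ := hneg_mem n x'
    rw [← hval]; exact hκ1 n y
  -- each κ r is bounded above (usc on a compact space)
  have hbound : ∀ r : ℕ, ∃ M : ℝ, 1 ≤ M ∧ ∀ y, κ r y ≤ M := by
    intro r
    by_contra hcon
    push_neg at hcon
    have hC : ∀ m : ℕ, ({y : X | (m : ℝ) ≤ κ r y}).Nonempty := by
      intro m
      obtain ⟨y, hy⟩ := hcon (max m 1) (le_max_right _ _)
      exact ⟨y, le_trans (le_max_left _ _) hy.le⟩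
    have hdir : Directed (· ⊇ ·) (fun m : ℕ => {y : X | (m : ℝ) ≤ κ r y}) := by
      intro m m'
      refine ⟨max m m', fun y hy => ?_, fun y hy => ?_⟩
      · exact le_trans
          (show (m:ℝ) ≤ ((max m m' : ℕ):ℝ) by exact_mod_cast le_max_left m m') hy
      · exact le_trans
          (show (m':ℝ) ≤ ((max m m' : ℕ):ℝ) by exact_mod_cast le_max_right m m') hy
    obtain ⟨z, hz⟩ := IsCompact.nonempty_iInter_of_directed_nonempty_isCompact_isClosed
      (fun m : ℕ => {y : X | (m : ℝ) ≤ κ r y}) hdir hC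
      (fun m => TopologicalSpace.NoetherianSpace.isCompact _)
      (fun m => hκusc r m)
    obtain ⟨m, hm⟩ := exists_nat_gt (κ r z)
    exact absurd (Set.mem_iInter.mp hz m) (by simpa using hm)
  obtain ⟨M₀, hM₀, hM₀b⟩ := hbound 0
  obtain ⟨M₁, hM₁, hM₁b⟩ := hbound 1
  -- κ n y ≤ M₀ * M₁ ^ n
  have hκpow : ∀ n (y : X), κ n y ≤ M₀ * M₁ ^ n := by
    intro n
    induction n with
    | zero => intro y; simpa using hM₀b y
    | succ n ih =>
      intro y
      have h1 : κ (1 + n) y ≤ κ 1 y * κ n (f^[1] y) := hκsub 1 n y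
      rw [Nat.add_comm n 1]
      calc κ (1 + n) y ≤ κ 1 y * κ n (f^[1] y) := h1
        _ ≤ M₁ * (M₀ * M₁ ^ n) := by
            apply mul_le_mul (hM₁b y) (ih _) (le_trans zero_le_one (hκ1 n _)) (by linarith)
        _ = M₀ * M₁ ^ (1 + n) := by ring
  set M : ℝ := M₀ * M₁ ^ l with hMdef
  have hM₁l : (1:ℝ) ≤ M₁ ^ l := one_le_pow₀ hM₁
  have hM : 1 ≤ M := le_trans hM₁l (le_mul_of_one_le_left (by linarith) hM₀)
  have hMpos : (0:ℝ) < M := by linarith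
  -- key inequality : κneg (a + c) x ≤ M * κneg c x for a ≤ l
  have keyineq : ∀ a c : ℕ, a ≤ l → κneg (a + c) x ≤ M * κneg c x := by
    intro a c hal
    obtain ⟨y, hy, hval⟩ := hneg_mem (a + c) x
    have hfy : f^[c] (f^[a] y) = x := by
      rw [← Function.iterate_add_apply, Nat.add_comm]; exact hy
    calc κneg (a + c) x = κ (a + c) y := hval.symm
      _ ≤ κ a y * κ c (f^[a] y) := hκsub a c y
      _ ≤ (M₀ * M₁ ^ a) * κneg c x := by
          apply mul_le_mul (hκpow a y) (hneg_ub c x _ hfy)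
            (le_trans zero_le_one (hκ1 c _)) (by positivity)
      _ ≤ M * κneg c x := by
          apply mul_le_mul_of_nonneg_right _ (le_trans zero_le_one (hneg_ge1 c x))
          exact mul_le_mul_of_nonneg_left (pow_le_pow_right₀ hM₁ hal) (by linarith)
  -- the sequence
  set b : ℕ → ℝ := fun m => (κneg m x) ^ (1 / (m : ℝ)) with hbdef
  have hbnn : ∀ m : ℕ, (0:ℝ) ≤ κneg m x := fun m => le_trans zero_le_one (hneg_ge1 m x)
  have hb1 : ∀ m, 1 ≤ b m := by
    intro m
    have h := Real.rpow_le_rpow zero_le_one (hneg_ge1 m x)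
      (one_div_nonneg.mpr (Nat.cast_nonneg m))
    rw [Real.one_rpow] at h
    exact h
  have hbub : ∀ m, b m ≤ M₀ * M₁ := by
    intro m
    rcases Nat.eq_zero_or_pos m with h | h
    · subst h
      simp only [hbdef, Nat.cast_zero, div_zero, Real.rpow_zero]
      nlinarith
    · have hm1 : (1:ℝ) ≤ m := by exact_mod_cast h
      have hexp : 1 / (m:ℝ) ≤ 1 := by
        rw [div_le_one (by linarith)]; linarith
      have hκn : κneg m x ≤ M₀ * M₁ ^ m := by
        obtain ⟨y, -, hval⟩ := hneg_mem m x
        rw [← hval]; exact hκpow m y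
      calc b m ≤ (M₀ * M₁ ^ m) ^ (1 / (m:ℝ)) :=
            Real.rpow_le_rpow (hbnn m) hκn (by positivity)
        _ = M₀ ^ (1 / (m:ℝ)) * (M₁ ^ m) ^ (1 / (m:ℝ)) :=
            Real.mul_rpow (by linarith) (by positivity)
        _ = M₀ ^ (1 / (m:ℝ)) * M₁ := by
            rw [← Real.rpow_natCast M₁ m, ← Real.rpow_mul (by linarith)]
            rw [mul_one_div, div_self (by exact_mod_cast h.ne' : (m:ℝ) ≠ 0), Real.rpow_one]
        _ ≤ M₀ * M₁ := by
            apply mul_le_mul_of_nonneg_right _ (by linarith)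
            calc M₀ ^ (1 / (m:ℝ)) ≤ M₀ ^ (1:ℝ) :=
                  Real.rpow_le_rpow_of_exponent_le hM₀ hexp
              _ = M₀ := Real.rpow_one M₀
  -- boundedness data
  have hBa : IsBoundedUnder (· ≤ ·) atTop (fun k : ℕ => b (k * l)) :=
    isBoundedUnder_of ⟨M₀ * M₁, fun k => hbub _⟩
  have hBb : IsBoundedUnder (· ≤ ·) atTop b :=
    isBoundedUnder_of ⟨M₀ * M₁, fun k => hbub _⟩
  have hba : IsBoundedUnder (· ≥ ·) atTop (fun k : ℕ => b (k * l)) :=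
    isBoundedUnder_of ⟨1, fun k => hb1 _⟩
  have hbb : IsBoundedUnder (· ≥ ·) atTop b :=
    isBoundedUnder_of ⟨1, fun k => hb1 _⟩
  -- M ^ (1/n) tends to 1
  have htend : Tendsto (fun n : ℕ => M ^ (1 / (n:ℝ))) atTop (𝓝 1) := by
    have heq : (fun n : ℕ => M ^ (1 / (n:ℝ)))
        = fun n : ℕ => Real.exp (Real.log M * (1 / (n:ℝ))) :=
      funext fun n => Real.rpow_def_of_pos hMpos _
    rw [heq, show (1:ℝ) = Real.exp 0 from (Real.exp_zero).symm]
    exact (Real.continuous_exp.tendsto 0).comp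
      (by simpa using (tendsto_one_div_atTop_nhds_zero_nat).const_mul (Real.log M))
  -- key comparison inequalities
  have hup : ∀ n : ℕ, l ≤ n → b n ≤ M ^ (1 / (n:ℝ)) * b (n / l * l) := by
    intro n hn
    have hdm : l * (n / l) + n % l = n := Nat.div_add_mod n l
    have hr : n % l < l := Nat.mod_lt _ hlpos
    have hklpos : 0 < n / l * l := by
      have : 1 ≤ n / l := (Nat.one_le_div_iff hlpos).mpr hn
      exact Nat.mul_pos this hlpos
    have hkey : κneg n x ≤ M * κneg (n / l * l) x := by
      have harith : n % l + n / l * l = n := by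
        have e1 : n / l * l = l * (n / l) := Nat.mul_comm _ _
        omega
      have := keyineq (n % l) (n / l * l) hr.le
      rwa [harith] at this
    have hnpos : (0:ℝ) < n := by exact_mod_cast lt_of_lt_of_le hlpos hn
    have hle : ((n / l * l : ℕ) : ℝ) ≤ (n:ℝ) := by exact_mod_cast Nat.div_mul_le_self n l
    have hklposR : (0:ℝ) < ((n / l * l : ℕ) : ℝ) := by exact_mod_cast hklpos
    calc b n ≤ (M * κneg (n / l * l) x) ^ (1 / (n:ℝ)) :=
          Real.rpow_le_rpow (hbnn n) hkey (by positivity)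
      _ = M ^ (1 / (n:ℝ)) * (κneg (n / l * l) x) ^ (1 / (n:ℝ)) :=
          Real.mul_rpow (by linarith) (hbnn _)
      _ ≤ M ^ (1 / (n:ℝ)) * (κneg (n / l * l) x) ^ (1 / ((n / l * l : ℕ):ℝ)) := by
          apply mul_le_mul_of_nonneg_left _ (by positivity)
          exact Real.rpow_le_rpow_of_exponent_le (hneg_ge1 _ x)
            (one_div_le_one_div_of_le hklposR hle)
      _ = M ^ (1 / (n:ℝ)) * b (n / l * l) := rfl
  have hdown : ∀ n : ℕ, 1 ≤ n → b ((n / l + 1) * l) ≤ M ^ (1 / (n:ℝ)) * b n := by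
    intro n hn
    have hdm : l * (n / l) + n % l = n := Nat.div_add_mod n l
    have hr : n % l < l := Nat.mod_lt _ hlpos
    have harith : (l - n % l) + n = (n / l + 1) * l := by
      have e1 : (n / l + 1) * l = l * (n / l) + l := by ring
      omega
    have hkey : κneg ((n / l + 1) * l) x ≤ M * κneg n x := by
      have := keyineq (l - n % l) n (Nat.sub_le _ _)
      rwa [harith] at this
    have hnpos : (0:ℝ) < n := by exact_mod_cast hn
    have hnle : (n:ℝ) ≤ (((n / l + 1) * l : ℕ) : ℝ) := by
      have : n ≤ (n / l + 1) * l := by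
        have e1 : (n / l + 1) * l = l * (n / l) + l := by ring
        omega
      exact_mod_cast this
    have hexp : 1 / (((n / l + 1) * l : ℕ) : ℝ) ≤ 1 / (n:ℝ) :=
      one_div_le_one_div_of_le hnpos hnle
    calc b ((n / l + 1) * l)
        ≤ (M * κneg n x) ^ (1 / (((n / l + 1) * l : ℕ):ℝ)) :=
          Real.rpow_le_rpow (hbnn _) hkey (by positivity)
      _ = M ^ (1 / (((n / l + 1) * l : ℕ):ℝ)) * (κneg n x) ^ (1 / (((n / l + 1) * l : ℕ):ℝ)) :=
          Real.mul_rpow (by linarith) (hbnn _)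
      _ ≤ M ^ (1 / (n:ℝ)) * (κneg n x) ^ (1 / (n:ℝ)) := by
          apply mul_le_mul (Real.rpow_le_rpow_of_exponent_le hM hexp)
            (Real.rpow_le_rpow_of_exponent_le (hneg_ge1 n x) hexp)
            (Real.rpow_nonneg (hbnn n) _) (by positivity)
      _ = M ^ (1 / (n:ℝ)) * b n := rfl
  -- rewrite the goal functions
  have hfun : (fun n : ℕ => (κneg (n * l) x) ^ (1 / (n * l : ℝ)))
      = fun n : ℕ => b (n * l) := by
    funext n
    simp only [hbdef, Nat.cast_mul]
  rw [hfun]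
  set φ : ℕ → ℕ := fun k => k * l with hφdef
  have hφ : Tendsto φ atTop atTop :=
    tendsto_atTop_mono (fun k => Nat.le_mul_of_pos_right k hlpos) tendsto_id
  have hmaple : map φ atTop ≤ atTop := hφ
  have hcomp_sup : limsup (fun k : ℕ => b (k * l)) atTop = limsup b (map φ atTop) :=
    limsup_comp b φ atTop
  have hcomp_inf : liminf (fun k : ℕ => b (k * l)) atTop = liminf b (map φ atTop) :=
    liminf_comp b φ atTop
  -- easy directions (subsequence)
  have htriv_sup : limsup (fun k : ℕ => b (k * l)) atTop ≤ limsup b atTop := by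
    rw [hcomp_sup]
    exact limsup_le_limsup_of_le hmaple
      ((isBoundedUnder_of ⟨1, fun n => hb1 n⟩ :
        IsBoundedUnder (· ≥ ·) (map φ atTop) b).isCoboundedUnder_le) hBb
  have htriv_inf : liminf b atTop ≤ liminf (fun k : ℕ => b (k * l)) atTop := by
    rw [hcomp_inf]
    exact liminf_le_liminf_of_le hmaple hbb
      ((isBoundedUnder_of ⟨M₀ * M₁, fun n => hbub n⟩ :
        IsBoundedUnder (· ≤ ·) (map φ atTop) b).isCoboundedUnder_ge)
  -- limsup values are at least 1
  have hLa1 : 1 ≤ limsup (fun k : ℕ => b (k * l)) atTop :=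
    le_limsup_of_frequently_le (Frequently.of_forall fun k => hb1 _) hBa
  have hlb1 : 1 ≤ liminf b atTop := le_liminf_of_le hBb.isCoboundedUnder_ge
      (Eventually.of_forall fun n => hb1 n)
  -- hard direction for limsup
  have hhard_sup : limsup b atTop ≤ limsup (fun k : ℕ => b (k * l)) atTop := by
    set La := limsup (fun k : ℕ => b (k * l)) atTop with hLadef
    apply le_of_forall_pos_le_add
    intro δ hδ
    set ε : ℝ := min 1 (δ / (2 + La)) with hεdef
    have hεpos : 0 < ε :=
      lt_min one_pos (div_pos hδ (by linarith))
    have hε1 : ε ≤ 1 := min_le_left _ _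
    have hεmul : ε * (2 + La) ≤ δ := by
      rw [← le_div_iff₀ (by linarith : (0:ℝ) < 2 + La)]
      exact min_le_right _ _
    have hfinal : (1 + ε) * (La + ε) ≤ La + δ := by nlinarith
    have hev1 : ∀ᶠ k in atTop, (fun k : ℕ => b (k * l)) k < La + ε :=
      eventually_lt_of_limsup_lt (by linarith) hBa
    obtain ⟨K, hK⟩ := eventually_atTop.mp hev1
    have hev2 : ∀ᶠ n : ℕ in atTop, M ^ (1 / (n:ℝ)) < 1 + ε :=
      htend.eventually_lt_const (by linarith)
    have hev : ∀ᶠ n : ℕ in atTop, b n ≤ La + δ := by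
      filter_upwards [hev2, eventually_ge_atTop (max l ((K + 1) * l))] with n hMn hn
      have hnl : l ≤ n := le_trans (le_max_left _ _) hn
      have hnK : K ≤ n / l := by
        have h1 : (K + 1) * l ≤ n := le_trans (le_max_right _ _) hn
        have h2 : K + 1 ≤ n / l := (Nat.le_div_iff_mul_le hlpos).mpr h1
        omega
      calc b n ≤ M ^ (1 / (n:ℝ)) * b (n / l * l) := hup n hnl
        _ ≤ (1 + ε) * (La + ε) := by
            apply mul_le_mul hMn.le (hK _ hnK).le
              (le_trans zero_le_one (hb1 _)) (by linarith)
        _ ≤ La + δ := hfinal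
    exact limsup_le_of_le hbb.isCoboundedUnder_le hev
  -- hard direction for liminf
  have hhard_inf : liminf (fun k : ℕ => b (k * l)) atTop ≤ liminf b atTop := by
    set lb := liminf b atTop with hlbdef
    apply le_of_forall_pos_le_add
    intro δ hδ
    set ε : ℝ := min 1 (δ / (2 + lb)) with hεdef
    have hεpos : 0 < ε :=
      lt_min one_pos (div_pos hδ (by linarith))
    have hε1 : ε ≤ 1 := min_le_left _ _
    have hεmul : ε * (2 + lb) ≤ δ := by
      rw [← le_div_iff₀ (by linarith : (0:ℝ) < 2 + lb)]
      exact min_le_right _ _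
    have hfinal : (1 + ε) * (lb + ε) ≤ lb + δ := by nlinarith
    have hfreq : ∃ᶠ n in atTop, b n < lb + ε :=
      frequently_lt_of_liminf_lt hBb.isCoboundedUnder_ge (by linarith)
    have hev2 : ∀ᶠ n : ℕ in atTop, M ^ (1 / (n:ℝ)) < 1 + ε :=
      htend.eventually_lt_const (by linarith)
    have hfreq2 : ∃ᶠ k in atTop, (fun k : ℕ => b (k * l)) k ≤ lb + δ := by
      rw [frequently_atTop]
      intro N
      obtain ⟨n, hbn, hMn, hn⟩ :=
        (hfreq.and_eventually (hev2.and (eventually_ge_atTop (max 1 (N * l))))).exists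
      have hn1 : 1 ≤ n := le_trans (le_max_left _ _) hn
      have hnN : N * l ≤ n := le_trans (le_max_right _ _) hn
      refine ⟨n / l + 1, ?_, ?_⟩
      · have : N ≤ n / l := (Nat.le_div_iff_mul_le hlpos).mpr hnN
        omega
      · calc b ((n / l + 1) * l) ≤ M ^ (1 / (n:ℝ)) * b n := hdown n hn1
          _ ≤ (1 + ε) * (lb + ε) := by
              apply mul_le_mul hMn.le hbn.le (le_trans zero_le_one (hb1 n)) (by linarith)
          _ ≤ lb + δ := hfinal
    exact liminf_le_of_frequently_le hfreq2 hba
  constructor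
  · exact le_antisymm htriv_sup hhard_sup
  · exact le_antisymm hhard_inf htriv_inf
end

section
/- Let Y ⊆ X be a nonempty irreducible closed subset with f^[l](Y) = Y for some l ≥ 1, let κ_+(Y) := lim_{n→∞} [κ_n(Y)]^{1/n}, and let δ > 1. If κ_+(Y) ≥ δ, then for every m ≥ 1 the set Y is contained in the orbit ⋃_{i≥0} f^[i]({x ∈ X : κ_m(x) ≥ δ^m}). -/
open Filter Topology

/-!
Fix `m ≥ 1` and suppose some `x ∈ Y` avoids the forward orbit of `S = {κ_m ≥ δ^m}`. Since the
closed sets `{κ_m ≥ δ^m - ε}` form a chain that must stabilise in a Noetherian space, there is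
`t < δ^m` with `κ_m ≤ t` off `S`. By periodicity, `x = f^[qm] z` with `z ∈ Y` for infinitely many
`q`, and none of `z, f^[m] z, …, f^[(q-1)m] z` lies in `S`, so submultiplicativity gives
`κ_{qm}(Y) ≤ t^q`. Hence `κ₊(Y) ≤ t^{1/m} < δ`.
-/

theorem TopologicalSpace.NoetherianSpace.exists_lt_setOf_le_eq {X : Type*} [TopologicalSpace X]
    [TopologicalSpace.NoetherianSpace X] (g : X → ℝ) (hg : ∀ s, IsClosed {x | s ≤ g x}) (a : ℝ) :
    ∃ t < a, {x | t ≤ g x} = {x | a ≤ g x} := by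
  let C : ℕ → TopologicalSpace.Closeds X := fun j => ⟨{x | a - 1 / (j + 1) ≤ g x}, hg _⟩
  have hC : Antitone C := fun i j hij x (hx : a - 1 / (j + 1 : ℝ) ≤ g x) =>
    show a - 1 / (i + 1 : ℝ) ≤ g x from le_trans (by gcongr) hx
  obtain ⟨N, hN⟩ := WellFoundedLT.antitone_chain_condition hC
  refine ⟨a - 1 / (N + 1), sub_lt_self a Nat.one_div_pos_of_nat, ?_⟩
  ext x
  refine ⟨fun hx => ?_, fun (hx : a ≤ g x) =>
    show a - 1 / (N + 1 : ℝ) ≤ g x from (sub_le_self _ Nat.one_div_pos_of_nat.le).trans hx⟩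
  have hxC : ∀ j ≥ N, a - 1 / (j + 1 : ℝ) ≤ g x := fun j hj =>
    show x ∈ C j from hN j hj ▸ hx
  have hlim : Tendsto (fun j : ℕ => a - 1 / (j + 1 : ℝ)) atTop (𝓝 a) := by
    simpa using
      (tendsto_const_nhds (x := a)).sub (tendsto_one_div_add_atTop_nhds_zero_nat (𝕜 := ℝ))
  exact le_of_tendsto hlim (eventually_atTop.2 ⟨N, hxC⟩)

section Cocycle

variable {X : Type*} (f : X → X) (κ : ℕ → X → ℝ)

theorem cocycle_le_pow (hκ0 : ∀ n x, 0 ≤ κ n x)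
    (hsub : ∀ n m x, κ (n + m) x ≤ κ n x * κ m (f^[n] x)) {m q : ℕ} {z : X} {t : ℝ}
    (hq : q ≠ 0) (h : ∀ j < q, κ m (f^[j * m] z) ≤ t) : κ (q * m) z ≤ t ^ q := by
  induction q with
  | zero => exact absurd rfl hq
  | succ q ih =>
    rcases eq_or_ne q 0 with rfl | hq'
    · simpa using h 0 one_pos
    · calc κ ((q + 1) * m) z = κ (q * m + m) z := by rw [add_mul, one_mul]
        _ ≤ κ (q * m) z * κ m (f^[q * m] z) := hsub _ _ _
        _ ≤ t ^ q * t := mul_le_mul (ih hq' fun j hj => h j (by omega)) (h q (by omega))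
          (hκ0 _ _) (pow_nonneg ((hκ0 _ _).trans (h 0 (by omega))) q)
        _ = t ^ (q + 1) := (pow_succ t q).symm

theorem sInf_cocycle_le_pow_of_notMem_orbit (hκ0 : ∀ n x, 0 ≤ κ n x)
    (hsub : ∀ n m x, κ (n + m) x ≤ κ n x * κ m (f^[n] x)) {Y S : Set X} {x : X} {m q : ℕ}
    {t : ℝ} (hq : q ≠ 0) (hY : f^[q * m] '' Y = Y) (hxY : x ∈ Y)
    (hx : x ∉ ⋃ i, f^[i] '' S) (ht : ∀ y ∉ S, κ m y ≤ t) :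
    sInf (κ (q * m) '' Y) ≤ t ^ q := by
  obtain ⟨z, hzY, hzx⟩ : x ∈ f^[q * m] '' Y := by rwa [hY]
  have hzS : ∀ j < q, f^[j * m] z ∉ S := fun j hj hjS => by
    refine hx (Set.mem_iUnion.2 ⟨(q - j) * m, f^[j * m] z, hjS, ?_⟩)
    rw [← Function.iterate_add_apply, ← add_mul, Nat.sub_add_cancel hj.le, hzx]
  refine (csInf_le ⟨0, ?_⟩ (Set.mem_image_of_mem _ hzY)).trans
    (cocycle_le_pow f κ hκ0 hsub hq fun j hj => ht _ (hzS j hj))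
  rintro _ ⟨y, -, rfl⟩
  exact hκ0 _ y

end Cocycle

theorem le_rpow_inv_of_frequently_le_pow {a : ℕ → ℝ} {c t : ℝ} {m : ℕ} (ha : ∀ n, 0 ≤ a n)
    (hc : Tendsto (fun n : ℕ => a n ^ (1 / (n : ℝ))) atTop (𝓝 c)) (hm : m ≠ 0) (ht : 0 ≤ t)
    (h : ∃ᶠ q in atTop, a (q * m) ≤ t ^ q) : c ≤ t ^ (m : ℝ)⁻¹ := by
  have hmul : Tendsto (fun q : ℕ => q * m) atTop atTop :=
    tendsto_atTop_mono (fun q => Nat.le_mul_of_pos_right q (Nat.pos_of_ne_zero hm)) tendsto_id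
  refine le_of_tendsto_of_frequently (hc.comp hmul) ?_
  refine (h.and_eventually (eventually_ne_atTop 0)).mono fun q ⟨hq, hq0⟩ => ?_
  have hpow : (t ^ q) ^ (1 / ((q * m : ℕ) : ℝ)) = t ^ (m : ℝ)⁻¹ := by
    rw [← Real.rpow_natCast, ← Real.rpow_mul ht]
    congr 1
    push_cast
    field_simp
  exact hpow ▸ Real.rpow_le_rpow (ha _) hq (by positivity)

theorem stmt_9_general {X : Type*} [TopologicalSpace X]
    [TopologicalSpace.NoetherianSpace X]
    (f : X → X)
    (κ : ℕ → X → ℝ)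
    (hκ1 : ∀ n x, 1 ≤ κ n x)
    (hκusc : ∀ n (δ : ℝ), IsClosed {x : X | δ ≤ κ n x})
    (hκsub : ∀ n m x, κ (n + m) x ≤ κ n x * κ m (f^[n] x))
    (Y : Set X)
    (l : ℕ) (hl : 1 ≤ l) (hY_per : f^[l] '' Y = Y)
    (c : ℝ)
    (hc : Tendsto (fun n : ℕ => (sInf (κ n '' Y)) ^ (1 / (n : ℝ))) atTop (nhds c))
    (δ : ℝ) (hδ : 1 < δ) (hcδ : δ ≤ c) :
    ∀ m : ℕ, 1 ≤ m → Y ⊆ ⋃ i : ℕ, f^[i] '' {x : X | δ ^ m ≤ κ m x} := by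
  intro m hm x hxY
  by_contra hx
  obtain ⟨t₀, ht₀, hgap⟩ :=
    TopologicalSpace.NoetherianSpace.exists_lt_setOf_le_eq (κ m) (hκusc m) (δ ^ m)
  have hδm : 1 < δ ^ m := one_lt_pow₀ hδ (by omega)
  set t := max t₀ 1
  have hκ0 : ∀ n x, 0 ≤ κ n x := fun n x => zero_le_one.trans (hκ1 n x)
  have ht : ∀ y ∉ {x | δ ^ m ≤ κ m x}, κ m y ≤ t := fun y hy => by
    rw [← hgap, Set.mem_ofPred_eq, not_le] at hy
    exact le_max_of_le_left hy.le
  have hper : ∀ k, f^[k * l * m] '' Y = Y := fun k => by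
    rw [show k * l * m = l * (k * m) by ring, Function.iterate_mul]
    exact Function.IsFixedPt.image_iterate hY_per _
  have hbound : ∃ᶠ q in atTop, sInf (κ (q * m) '' Y) ≤ t ^ q :=
    frequently_atTop.2 fun k => ⟨(k + 1) * l, by nlinarith,
      sInf_cocycle_le_pow_of_notMem_orbit f κ hκ0 hκsub (by positivity) (hper _) hxY hx ht⟩
  have hct : c ≤ t ^ (m : ℝ)⁻¹ := le_rpow_inv_of_frequently_le_pow
    (fun n => Real.sInf_nonneg (by rintro _ ⟨y, -, rfl⟩; exact hκ0 n y)) hc (by omega)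
    (by positivity) hbound
  have htδ : t ^ (m : ℝ)⁻¹ < δ := by
    calc t ^ (m : ℝ)⁻¹ < (δ ^ m) ^ (m : ℝ)⁻¹ :=
          Real.rpow_lt_rpow (by positivity) (max_lt ht₀ hδm) (by positivity)
      _ = δ := Real.pow_rpow_inv_natCast (by linarith) (by omega)
  linarith

/-- If `Y` is a periodic nonempty irreducible closed subset with `κ₊(Y) ≥ δ > 1`,
then for every `m ≥ 1`, `Y` is contained in the orbit of `{κ_m ≥ δ^m}`. -/
theorem stmt_9 {X : Type*} [TopologicalSpace X] [Nonempty X]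
    [TopologicalSpace.NoetherianSpace X] [IrreducibleSpace X]
    (f : X → X) (hf_cont : Continuous f) (hf_open : IsOpenMap f)
    (hf_closed : IsClosedMap f) (hf_surj : Function.Surjective f)
    (κ : ℕ → X → ℝ)
    (hκ1 : ∀ n x, 1 ≤ κ n x)
    (hκmin : ∀ n, ∃ x, κ n x = 1)
    (hκusc : ∀ n (δ : ℝ), IsClosed {x : X | δ ≤ κ n x})
    (hκsub : ∀ n m x, κ (n + m) x ≤ κ n x * κ m (f^[n] x))
    (hBaire : ∀ Y : Set X, Y.Nonempty → IsClosed Y → IsIrreducible Y →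
      ∀ Z : ℕ → Set X, (∀ i, IsClosed (Z i) ∧ Z i ⊂ Y) → Y ≠ ⋃ i, Z i)
    (Y : Set X) (hY_ne : Y.Nonempty) (hY_cl : IsClosed Y) (hY_irr : IsIrreducible Y)
    (l : ℕ) (hl : 1 ≤ l) (hY_per : f^[l] '' Y = Y)
    (c : ℝ)
    (hc : Tendsto (fun n : ℕ => (sInf (κ n '' Y)) ^ (1 / (n : ℝ))) atTop (nhds c))
    (δ : ℝ) (hδ : 1 < δ) (hcδ : δ ≤ c) :
    ∀ m : ℕ, 1 ≤ m → Y ⊆ ⋃ i : ℕ, f^[i] '' {x : X | δ ^ m ≤ κ m x} :=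
  stmt_9_general f κ hκ1 hκusc hκsub Y l hl hY_per c hc δ hδ hcδ
end

section
/- Assume the cocycle is multiplicative, i.e. κ_{n+m}(x) = κ_n(x)·κ_m(f^[n](x)) for all n, m ≥ 0 and x ∈ X. Then for every x ∈ X the sequence [κ_n(x)]^{1/n} converges as n → ∞ to a limit κ_+(x), and the limit function satisfies κ_+(f(x)) = κ_+(x) for all x ∈ X. -/
/-!
Multiplicativity gives `log κ_n = ∑_{i<n} a ∘ f^[i]` with `a = log κ_1`, a nonnegative upper
semicontinuous function, bounded because a Noetherian space is compact. Approximating `a`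
uniformly by step functions built from its closed superlevel sets reduces the convergence of
its Birkhoff averages to the convergence of the frequency of visits of an orbit to a closed set
`T`. That is proved by well-founded induction on a closed set `Ω` containing the orbit (closed
sets of a Noetherian space satisfy the descending chain condition). If the visits have positive
upper density and `Ω ⊄ T`, take a minimal closed `C ⊆ T ∩ Ω` visited with positive upper density.
A pigeonhole argument gives `d > 0` such that `C ∩ (g^[d])⁻¹' C` is still visited with positive
upper density, so `g^[d]` maps `C` into itself by minimality. Once the orbit has entered `C`,
splitting times by their residue mod `d` reduces the question to `g^[d]`-orbits inside `C ⊊ Ω`.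
The limit is `f`-invariant because Birkhoff averages of a bounded function at `x` and at `f x`
differ by `O(1/n)`.
-/

open Filter Finset Function Topology

theorem exists_tendsto_of_forall_eventually_dist_lt {α : Type*} [PseudoMetricSpace α]
    [CompleteSpace α] {u : ℕ → α} (h : ∀ ε > 0, ∃ ℓ, ∀ᶠ n in atTop, dist (u n) ℓ < ε) :
    ∃ ℓ, Tendsto u atTop (𝓝 ℓ) := by
  refine cauchySeq_tendsto_of_complete (Metric.cauchySeq_iff'.2 fun ε hε => ?_)
  obtain ⟨ℓ, hℓ⟩ := h (ε / 2) (half_pos hε)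
  obtain ⟨N, hN⟩ := eventually_atTop.1 hℓ
  exact ⟨N, fun n hn => (dist_triangle_right _ _ ℓ).trans_lt (by linarith [hN n hn, hN N le_rfl])⟩

theorem UpperSemicontinuous.bddAbove_range {X : Type*} [TopologicalSpace X] [CompactSpace X]
    {a : X → ℝ} (ha : UpperSemicontinuous a) : BddAbove (Set.range a) := by
  simpa using (ha.upperSemicontinuousOn Set.univ).bddAbove_of_isCompact isCompact_univ

theorem card_filter_Icc_natCast_le {J : ℕ} {t : ℝ} (ht0 : 0 ≤ t) (ht : t ≤ J) :
    #{j ∈ Finset.Icc 1 J | ((j : ℕ) : ℝ) ≤ t} = ⌊t⌋₊ := by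
  rw [show {j ∈ Finset.Icc 1 J | ((j : ℕ) : ℝ) ≤ t} = Finset.Icc 1 ⌊t⌋₊ by
    ext j
    simp only [mem_filter, Finset.mem_Icc, ← Nat.le_floor_iff ht0]
    have := Nat.floor_le_of_le (n := J) ht
    omega]
  simp

theorem abs_sub_mul_natFloor_div_le {t δ : ℝ} (ht : 0 ≤ t) (hδ : 0 < δ) :
    |t - δ * ⌊t / δ⌋₊| ≤ δ := by
  have hfloor := Nat.floor_le (div_nonneg ht hδ.le)
  have hfloor' := Nat.lt_floor_add_one (t / δ)
  rw [le_div_iff₀ hδ] at hfloor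
  rw [div_lt_iff₀ hδ] at hfloor'
  rw [abs_le]
  constructor <;> nlinarith

theorem card_le_div_add_one_of_separated {s : Finset ℕ} {n G : ℕ} (hG : 0 < G)
    (hs : ∀ v ∈ s, v < n) (hsep : ∀ v ∈ s, ∀ w ∈ s, v < w → v + G ≤ w) :
    #s ≤ n / G + 1 := by
  have hnot_lt : ∀ {v w}, v ∈ s → w ∈ s → v / G = w / G → ¬ v < w := by
    intro v w hv hw hvw hlt
    have := hsep v hv w hw hlt
    have := Nat.div_add_mod v G
    have := Nat.div_add_mod w G
    have := Nat.mod_lt v hG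
    have := Nat.mod_lt w hG
    rw [hvw] at *
    omega
  have hinj : Set.InjOn (· / G) s := fun v hv w hw hvw =>
    le_antisymm (not_lt.1 (hnot_lt hw hv hvw.symm)) (not_lt.1 (hnot_lt hv hw hvw))
  calc #s ≤ #(range (n / G + 1)) := card_le_card_of_injOn _
        (fun v hv => mem_range.2 (Nat.lt_succ_of_le (Nat.div_le_div_right (hs v hv).le))) hinj
    _ = n / G + 1 := card_range _

theorem Nat.count_le_sum_count_and_add (p : ℕ → Prop) [DecidablePred p] (n : ℕ) {G : ℕ}
    (hG : 0 < G) :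
    Nat.count p n ≤ ∑ d ∈ Icc 1 G, Nat.count (fun k => p k ∧ p (k + d)) n + (n / G + 1) := by
  simp only [Nat.count_eq_card_filter_range]
  set s := {k ∈ range n | p k}
  have hrecurrent : #{v ∈ s | ∃ d ∈ Icc 1 G, p (v + d)}
      ≤ ∑ d ∈ Icc 1 G, #{k ∈ range n | p k ∧ p (k + d)} := by
    refine (card_le_card fun v hv => ?_).trans card_biUnion_le
    obtain ⟨hvs, d, hd, hvd⟩ := mem_filter.1 hv
    exact mem_biUnion.2 ⟨d, hd, mem_filter.2 ⟨(mem_filter.1 hvs).1, (mem_filter.1 hvs).2, hvd⟩⟩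
  have hisolated : #{v ∈ s | ¬ ∃ d ∈ Icc 1 G, p (v + d)} ≤ n / G + 1 := by
    refine card_le_div_add_one_of_separated hG (fun v hv => ?_) fun v hv w hw hvw => ?_
    · exact mem_range.1 (mem_filter.1 (mem_filter.1 hv).1).1
    · by_contra! hwv
      refine (mem_filter.1 hv).2 ⟨w - v, mem_Icc.2 ⟨by omega, by omega⟩, ?_⟩
      rw [Nat.add_sub_cancel' hvw.le]
      exact (mem_filter.1 (mem_filter.1 hw).1).2
  rw [← card_filter_add_card_filter_not (s := s) (fun v => ∃ d ∈ Icc 1 G, p (v + d))]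
  omega

theorem exists_ge_frequently_of_not_tendsto_zero {u : ℕ → ℝ} (hu : 0 ≤ u)
    (h : ¬ Tendsto u atTop (𝓝 0)) : ∃ ε > 0, ∃ᶠ n in atTop, ε ≤ u n := by
  by_contra! H
  refine h (tendsto_order.2 ⟨fun a ha => Eventually.of_forall fun n => ha.trans_le (hu n),
    fun ε hε => ?_⟩)
  simpa [Filter.not_frequently] using H ε hε

theorem exists_pos_not_tendsto_count_and_add {p : ℕ → Prop} [DecidablePred p]
    (h : ¬ Tendsto (fun n => (Nat.count p n : ℝ) / n) atTop (𝓝 0)) :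
    ∃ d, 0 < d ∧
      ¬ Tendsto (fun n => (Nat.count (fun k => p k ∧ p (k + d)) n : ℝ) / n) atTop (𝓝 0) := by
  obtain ⟨ε, hε, hfreq⟩ := exists_ge_frequently_of_not_tendsto_zero (fun n => by positivity) h
  obtain ⟨G, hG⟩ := exists_nat_one_div_lt (half_pos hε)
  by_contra! H
  set S : ℕ → ℝ := fun n => ∑ d ∈ Icc 1 (G + 1), (Nat.count (fun k => p k ∧ p (k + d)) n : ℝ)
  have hsmall : Tendsto (fun n : ℕ => (S n + 1) / n) atTop (𝓝 0) := by
    simpa [S, add_div, sum_div] using (tendsto_finsetSum _ fun d hd => H d (mem_Icc.1 hd).1).add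
      tendsto_one_div_atTop_nhds_zero_nat
  obtain ⟨n, hεn, hn, hn1⟩ := (hfreq.and_eventually
    ((hsmall.eventually (gt_mem_nhds (half_pos hε))).and (eventually_ge_atTop 1))).exists
  have hnpos : (0 : ℝ) < n := by exact_mod_cast hn1
  have hcount : (Nat.count p n : ℝ) ≤ S n + n / (G + 1) + 1 := by
    have hdiv : ((n / (G + 1) : ℕ) : ℝ) ≤ n / (G + 1) := by exact_mod_cast Nat.cast_div_le
    have : (Nat.count p n : ℝ) ≤ S n + ((n / (G + 1) : ℕ) : ℝ) + 1 := by
      simp only [S]; exact_mod_cast Nat.count_le_sum_count_and_add p n (G.succ_pos)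
    linarith
  have : (Nat.count p n : ℝ) / n ≤ (S n + 1) / n + 1 / (G + 1) := by
    rw [div_add' _ _ _ (by positivity), div_le_div_iff_of_pos_right hnpos]
    linarith [div_eq_mul_one_div (n : ℝ) (G + 1)]
  linarith

theorem tendsto_div_of_monotone_of_tendsto_div_add_mul {u : ℕ → ℝ} (hu : Monotone u) {a d : ℕ}
    (hd : 0 < d) {L : ℝ} (h : Tendsto (fun Q : ℕ => u (a + d * Q) / Q) atTop (𝓝 L)) :
    Tendsto (fun n : ℕ => u n / n) atTop (𝓝 (L / d)) := by
  have hdR : (0 : ℝ) < d := by exact_mod_cast hd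
  refine tendsto_div_of_monotone_of_exists_subseq_tendsto_div u _ hu fun r hr =>
    ⟨fun Q => a + d * Q, ?_,
      tendsto_atTop_mono (fun Q => Nat.le_add_left _ a) (tendsto_id.const_mul_atTop' hd), ?_⟩
  · obtain ⟨N, hN⟩ := exists_nat_ge (1 / (r - 1))
    filter_upwards [eventually_ge_atTop N] with Q hQ
    have : 1 ≤ (r - 1) * Q := by
      rw [div_le_iff₀ (by linarith)] at hN
      nlinarith [(Nat.cast_le (α := ℝ)).2 hQ]
    push_cast
    nlinarith [(Nat.cast_nonneg a : (0:ℝ) ≤ a)]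
  · have hratio : Tendsto (fun Q : ℕ => ((a + d * Q : ℕ) : ℝ) / Q) atTop (𝓝 d) := by
      have := (tendsto_const_div_atTop_nhds_zero_nat (a : ℝ)).add_const (d : ℝ)
      rw [zero_add] at this
      refine this.congr' ((eventually_ne_atTop 0).mono fun Q hQ => ?_)
      push_cast
      field_simp
    refine ((h.div hratio hdR.ne').congr' ((eventually_ne_atTop 0).mono fun Q hQ => ?_))
    have : ((a + d * Q : ℕ) : ℝ) ≠ 0 := by positivity
    simp only [Pi.div_apply]
    field_simp

section Birkhoff

variable {α : Type*}

theorem birkhoffSum_mul {M : Type*} [AddCommMonoid M] (g : α → α) (φ : α → M) (d Q : ℕ)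
    (y : α) :
    birkhoffSum g φ (d * Q) y = ∑ c ∈ range d, birkhoffSum (g^[d]) (φ ∘ g^[c]) Q y := by
  induction Q with
  | zero => simp
  | succ Q ih =>
    simp only [mul_add_one, birkhoffSum_add, ih, birkhoffSum_succ, sum_add_distrib, ← iterate_mul,
      comp_apply]
    rfl

theorem monotone_birkhoffSum {g : α → α} {φ : α → ℝ} (hφ : 0 ≤ φ) (x : α) :
    Monotone (birkhoffSum g φ · x) :=
  monotone_nat_of_le_succ fun n => by simpa [birkhoffSum_succ] using hφ _

theorem tendsto_birkhoffAverage_of_tendsto_birkhoffAverage_iterate {g : α → α} {φ : α → ℝ}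
    (hφ : 0 ≤ φ) (x : α) {a d : ℕ} (hd : 0 < d) {L : ℕ → ℝ}
    (hL : ∀ c < d, Tendsto (birkhoffAverage ℝ (g^[d]) (φ ∘ g^[c]) · (g^[a] x)) atTop (𝓝 (L c))) :
    Tendsto (birkhoffAverage ℝ g φ · x) atTop (𝓝 ((∑ c ∈ range d, L c) / d)) := by
  have hsum : Tendsto (fun Q : ℕ => birkhoffSum g φ (a + d * Q) x / Q) atTop
      (𝓝 (∑ c ∈ range d, L c)) := by
    have := (tendsto_const_div_atTop_nhds_zero_nat (birkhoffSum g φ a x)).add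
      (tendsto_finsetSum (range d) fun c hc => hL c (mem_range.1 hc))
    rw [zero_add] at this
    refine this.congr fun Q => ?_
    simp [birkhoffSum_add, birkhoffSum_mul, birkhoffAverage, div_eq_inv_mul, mul_add, mul_sum]
  refine (tendsto_div_of_monotone_of_tendsto_div_add_mul (monotone_birkhoffSum hφ x) hd
    hsum).congr fun n => ?_
  simp [birkhoffAverage, div_eq_inv_mul]

theorem birkhoffAverage_indicator_one_eq_count (g : α → α) (T : Set α) [DecidablePred (· ∈ T)]
    (n : ℕ) (x : α) :
    birkhoffAverage ℝ g (T.indicator (1 : α → ℝ)) n x =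
      (Nat.count (fun k => g^[k] x ∈ T) n : ℝ) / n := by
  simp [birkhoffAverage, birkhoffSum, Nat.count_eq_card_filter_range, Set.indicator_apply,
    div_eq_inv_mul]

theorem birkhoffAverage_sum_smul {ι : Type*} (g : α → α) (s : Finset ι) (c : ι → ℝ)
    (φ : ι → α → ℝ) (n : ℕ) (x : α) :
    birkhoffAverage ℝ g (∑ i ∈ s, c i • φ i) n x =
      ∑ i ∈ s, c i • birkhoffAverage ℝ g (φ i) n x := by
  simp [birkhoffAverage, birkhoffSum, Finset.sum_apply, mul_sum, sum_comm (s := s), mul_left_comm]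

theorem norm_birkhoffAverage_le (g : α → α) {φ : α → ℝ} {C : ℝ} (hC : 0 ≤ C)
    (hφ : ∀ y, ‖φ y‖ ≤ C) (n : ℕ) (x : α) : ‖birkhoffAverage ℝ g φ n x‖ ≤ C := by
  rcases n.eq_zero_or_pos with rfl | hn
  · simpa using hC
  rw [birkhoffAverage, birkhoffSum, norm_smul, norm_inv, Real.norm_natCast,
    inv_mul_le_iff₀ (by exact_mod_cast hn)]
  simpa using norm_sum_le_of_le (range n) fun k _ => hφ (g^[k] x)

theorem Filter.Tendsto.birkhoffAverage_apply {g : α → α} {φ : α → ℝ}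
    (hφ : Bornology.IsBounded (Set.range φ)) {x : α} {ℓ : ℝ}
    (h : Tendsto (birkhoffAverage ℝ g φ · x) atTop (𝓝 ℓ)) :
    Tendsto (birkhoffAverage ℝ g φ · (g x)) atTop (𝓝 ℓ) := by
  simpa using (tendsto_birkhoffAverage_apply_sub_birkhoffAverage' ℝ hφ g x).add h

end Birkhoff

open Set TopologicalSpace

section Noetherian

variable {X : Type*} [TopologicalSpace X] [NoetherianSpace X]

theorem exists_isClosed_subset_mapsTo_iterate {g : X → X} (hg : Continuous g) {T : Set X}
    (hT : IsClosed T) {x : X}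
    (h : ¬ Tendsto (birkhoffAverage ℝ g (T.indicator (1 : X → ℝ)) · x) atTop (𝓝 0)) :
    ∃ C ⊆ T, IsClosed C ∧ (∃ d, 0 < d ∧ MapsTo g^[d] C C) ∧ ∃ n, g^[n] x ∈ C := by
  classical
  let S := {C : Closeds X | (C : Set X) ⊆ T ∧
    ¬ Tendsto (birkhoffAverage ℝ g ((C : Set X).indicator (1 : X → ℝ)) · x) atTop (𝓝 0)}
  obtain ⟨C, ⟨hCT, hC⟩, hmin⟩ :=
    (wellFounded_lt (α := Closeds X)).has_min S ⟨⟨T, hT⟩, subset_rfl, h⟩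
  simp only [birkhoffAverage_indicator_one_eq_count] at hC
  obtain ⟨d, hd, hCd⟩ := exists_pos_not_tendsto_count_and_add hC
  let C' : Closeds X := ⟨C ∩ g^[d] ⁻¹' C, C.isClosed.inter (C.isClosed.preimage (hg.iterate d))⟩
  have hC' : C' ∈ S := ⟨inter_subset_left.trans hCT, by
    simpa [C', birkhoffAverage_indicator_one_eq_count, ← iterate_add_apply, add_comm] using hCd⟩
  have hC'C : C' = C := (show C' ≤ C from inter_subset_left).eq_of_not_lt (hmin C' hC')
  refine ⟨C, hCT, C.isClosed, ⟨d, hd, fun y hy => ?_⟩, ?_⟩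
  · rw [← hC'C] at hy
    exact hy.2
  · by_contra! hnot
    refine hC (tendsto_const_nhds.congr fun n => ?_)
    rw [Nat.count_of_forall_not fun m _ => hnot m, Nat.cast_zero, zero_div]

theorem exists_tendsto_birkhoffAverage_indicator_of_forall_mem (Ω : Closeds X) {g : X → X}
    (hg : Continuous g) {x : X} (hx : ∀ k, g^[k] x ∈ Ω) {T : Set X} (hT : IsClosed T) :
    ∃ L, Tendsto (birkhoffAverage ℝ g (T.indicator (1 : X → ℝ)) · x) atTop (𝓝 L) := by
  induction Ω using WellFoundedLT.induction generalizing g x T with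
  | _ Ω IH =>
  by_cases hΩT : (Ω : Set X) ⊆ T
  · refine ⟨1, tendsto_const_nhds.congr' ((eventually_ne_atTop 0).mono fun n hn => ?_)⟩
    simp [birkhoffAverage, birkhoffSum, indicator_of_mem (hΩT (hx _)), hn]
  by_cases h0 : Tendsto (birkhoffAverage ℝ g (T.indicator (1 : X → ℝ)) · x) atTop (𝓝 0)
  · exact ⟨0, h0⟩
  have hTΩ : (birkhoffAverage ℝ g ((T ∩ Ω).indicator (1 : X → ℝ)) · x) =
      (birkhoffAverage ℝ g (T.indicator 1) · x) := by
    ext n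
    simp only [birkhoffAverage, birkhoffSum, inter_indicator_one, Pi.mul_apply,
      indicator_of_mem (hx _), Pi.one_apply, mul_one]
  obtain ⟨C, hCTΩ, hC, ⟨d, hd, hCd⟩, n₀, hn₀⟩ :=
    exists_isClosed_subset_mapsTo_iterate hg (hT.inter Ω.isClosed) (hTΩ ▸ h0)
  have hCΩ : (⟨C, hC⟩ : Closeds X) < Ω := by
    refine lt_of_le_of_ne (fun y hy => (hCTΩ hy).2) fun hCΩ => hΩT fun y hy => ?_
    rw [← hCΩ] at hy
    exact (hCTΩ hy).1
  have hL : ∀ c, ∃ L, Tendsto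
      (birkhoffAverage ℝ g^[d] (T.indicator (1 : X → ℝ) ∘ g^[c]) · (g^[n₀] x)) atTop (𝓝 L) :=
    fun c => by
    rw [show T.indicator (1 : X → ℝ) ∘ g^[c] = (g^[c] ⁻¹' T).indicator 1 by
      ext; exact (indicator_comp_right _).symm]
    exact IH _ hCΩ (hg.iterate d) (fun k => hCd.iterate k hn₀) (hT.preimage (hg.iterate c))
  choose L hL using hL
  exact ⟨_, tendsto_birkhoffAverage_of_tendsto_birkhoffAverage_iterate
    (indicator_nonneg fun _ _ => zero_le_one) x hd fun c _ => hL c⟩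

theorem exists_tendsto_birkhoffAverage_indicator {g : X → X} (hg : Continuous g) {T : Set X}
    (hT : IsClosed T) (x : X) :
    ∃ L, Tendsto (birkhoffAverage ℝ g (T.indicator (1 : X → ℝ)) · x) atTop (𝓝 L) :=
  exists_tendsto_birkhoffAverage_indicator_of_forall_mem ⊤ hg (fun _ => trivial) hT

theorem exists_tendsto_birkhoffAverage_of_upperSemicontinuous {g : X → X} (hg : Continuous g)
    {a : X → ℝ} (ha0 : 0 ≤ a) (ha : UpperSemicontinuous a) (x : X) :
    ∃ ℓ, Tendsto (birkhoffAverage ℝ g a · x) atTop (𝓝 ℓ) := by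
  obtain ⟨M, hM⟩ := ha.bddAbove_range
  refine exists_tendsto_of_forall_eventually_dist_lt fun ε hε => ?_
  set δ := ε / 2
  have hδ0 : 0 < δ := half_pos hε
  set J := ⌈M / δ⌉₊
  let T : ℕ → Set X := fun j => a ⁻¹' Ici (j * δ)
  let ψ : X → ℝ := ∑ j ∈ Finset.Icc 1 J, δ • (T j).indicator 1
  have hψ : ∀ y, ‖(a - ψ) y‖ ≤ δ := by
    intro y
    have hy0 : 0 ≤ a y / δ := div_nonneg (ha0 y) hδ0.le
    have hyJ : a y / δ ≤ J :=
      (div_le_div_of_nonneg_right (hM ⟨y, rfl⟩) hδ0.le).trans (Nat.le_ceil _)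
    have hψy : ψ y = δ * ⌊a y / δ⌋₊ := by
      classical
      rw [← card_filter_Icc_natCast_le hy0 hyJ]
      simp [ψ, T, Finset.sum_apply, indicator_apply, le_div_iff₀ hδ0, Finset.sum_ite, mul_comm]
    rw [Pi.sub_apply, hψy, Real.norm_eq_abs]
    exact abs_sub_mul_natFloor_div_le (ha0 y) hδ0
  choose L hL using fun j : ℕ =>
    exists_tendsto_birkhoffAverage_indicator hg (ha.isClosed_preimage (j * δ)) x
  set ℓ := ∑ j ∈ Finset.Icc 1 J, δ • L j
  have hlim : Tendsto (birkhoffAverage ℝ g ψ · x) atTop (𝓝 ℓ) := by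
    simp_rw [ψ, birkhoffAverage_sum_smul]
    exact tendsto_finsetSum _ fun j _ => (hL j).const_smul δ
  refine ⟨ℓ, (hlim.eventually (Metric.ball_mem_nhds _ hδ0)).mono fun n hn => ?_⟩
  calc dist (birkhoffAverage ℝ g a n x) ℓ
      ≤ dist (birkhoffAverage ℝ g a n x) (birkhoffAverage ℝ g ψ n x)
        + dist (birkhoffAverage ℝ g ψ n x) ℓ := dist_triangle _ _ _
    _ < δ + δ := by
      refine add_lt_add_of_le_of_lt ?_ hn
      simpa [dist_eq_norm, birkhoffAverage_sub] using norm_birkhoffAverage_le g hδ0.le hψ n x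
    _ = ε := add_halves ε

end Noetherian

section Cocycle

variable {α : Type*} {f : α → α} {κ : ℕ → α → ℝ}

theorem log_eq_birkhoffSum_of_mul (hpos : ∀ n x, 0 < κ n x)
    (hmul : ∀ n m x, κ (n + m) x = κ n x * κ m (f^[n] x)) (n : ℕ) (x : α) :
    Real.log (κ n x) = birkhoffSum f (fun y => Real.log (κ 1 y)) n x := by
  induction n with
  | zero =>
    have : κ 0 x = 1 := by
      have h := hmul 0 0 x
      simp only [add_zero, iterate_zero, id_eq] at h
      exact (mul_eq_left₀ (hpos 0 x).ne').1 h.symm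
    simp [this]
  | succ n ih =>
    rw [hmul n 1 x, Real.log_mul (hpos n x).ne' (hpos 1 _).ne', ih, birkhoffSum_succ]

theorem rpow_one_div_eq_exp_birkhoffAverage_of_mul (hpos : ∀ n x, 0 < κ n x)
    (hmul : ∀ n m x, κ (n + m) x = κ n x * κ m (f^[n] x)) (n : ℕ) (x : α) :
    κ n x ^ (1 / (n : ℝ)) = Real.exp (birkhoffAverage ℝ f (fun y => Real.log (κ 1 y)) n x) := by
  rw [Real.rpow_def_of_pos (hpos n x), birkhoffAverage, ← log_eq_birkhoffSum_of_mul hpos hmul,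
    smul_eq_mul, mul_one_div, inv_mul_eq_div]

end Cocycle

theorem stmt_14_general {X : Type*} [TopologicalSpace X]
    [TopologicalSpace.NoetherianSpace X]
    (f : X → X) (hf_cont : Continuous f)
    (κ : ℕ → X → ℝ)
    (hκ1 : ∀ n x, 1 ≤ κ n x)
    (hκusc : ∀ n (δ : ℝ), IsClosed {x : X | δ ≤ κ n x})
    (hκmult : ∀ n m x, κ (n + m) x = κ n x * κ m (f^[n] x)) :
    ∃ κp : X → ℝ,
      (∀ x : X,
        Tendsto (fun n : ℕ => (κ n x) ^ (1 / (n : ℝ))) atTop (nhds (κp x))) ∧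
      ∀ x : X, κp (f x) = κp x := by
  have hκpos : ∀ n x, 0 < κ n x := fun n x => one_pos.trans_le (hκ1 n x)
  set a : X → ℝ := fun x => Real.log (κ 1 x)
  have ha0 : 0 ≤ a := fun x => Real.log_nonneg (hκ1 1 x)
  have ha : UpperSemicontinuous a := upperSemicontinuous_iff_isClosed_preimage.2 fun δ => by
    convert hκusc 1 (Real.exp δ) using 1
    ext x
    simp [a, Real.le_log_iff_exp_le (hκpos 1 x)]
  have hbdd : Bornology.IsBounded (range a) :=
    isBounded_iff_bddBelow_bddAbove.2 ⟨⟨0, forall_mem_range.2 ha0⟩, ha.bddAbove_range⟩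
  choose ℓ hℓ using exists_tendsto_birkhoffAverage_of_upperSemicontinuous hf_cont ha0 ha
  refine ⟨fun x => Real.exp (ℓ x), fun x => ?_, fun x => ?_⟩
  · simp only [rpow_one_div_eq_exp_birkhoffAverage_of_mul hκpos hκmult]
    exact (Real.continuous_exp.tendsto _).comp (hℓ x)
  · exact congrArg Real.exp (tendsto_nhds_unique (hℓ (f x)) ((hℓ x).birkhoffAverage_apply hbdd))

/-- For a multiplicative cocycle, `[κ_n(x)]^{1/n}` converges for every `x` and
the limit function `κ₊` is invariant: `κ₊ ∘ f = κ₊`. -/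
theorem stmt_14 {X : Type*} [TopologicalSpace X] [Nonempty X]
    [TopologicalSpace.NoetherianSpace X] [IrreducibleSpace X]
    (f : X → X) (hf_cont : Continuous f) (hf_open : IsOpenMap f)
    (hf_closed : IsClosedMap f) (hf_surj : Function.Surjective f)
    (κ : ℕ → X → ℝ)
    (hκ1 : ∀ n x, 1 ≤ κ n x)
    (hκmin : ∀ n, ∃ x, κ n x = 1)
    (hκusc : ∀ n (δ : ℝ), IsClosed {x : X | δ ≤ κ n x})
    (hκmult : ∀ n m x, κ (n + m) x = κ n x * κ m (f^[n] x))
    (hBaire : ∀ Y : Set X, Y.Nonempty → IsClosed Y → IsIrreducible Y →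
      ∀ Z : ℕ → Set X, (∀ i, IsClosed (Z i) ∧ Z i ⊂ Y) → Y ≠ ⋃ i, Z i)
    (k : ℕ) (hdimX : topologicalKrullDim X = (k : ℕ∞)) :
    ∃ κp : X → ℝ,
      (∀ x : X,
        Tendsto (fun n : ℕ => (κ n x) ^ (1 / (n : ℝ))) atTop (nhds (κp x))) ∧
      ∀ x : X, κp (f x) = κp x :=
  stmt_14_general f hf_cont κ hκ1 hκusc hκmult
end

section
/- Let X be a Noetherian topological space, f : X → X a continuous surjective map, m ≥ 1 an integer, and E ⊆ X a closed subset such that (f^[m])⁻¹(E) ⊆ E. Then (f^[m])⁻¹(E) = E and f^[m](E) = E; moreover the set Ẽ := ⋃_{i=0}^{m-1} (f^[i])⁻¹(E) satisfies f⁻¹(Ẽ) = Ẽ and f(Ẽ) = Ẽ. -/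
/-!
The closed sets `(f^[m]^[n])⁻¹(E)` form a descending chain, which stabilises because `X` is
Noetherian; since `f^[m]^[n]` is surjective, `(f^[m]^[n])⁻¹` is injective on sets and the
stabilisation `(f^[m]^[n+1])⁻¹(E) = (f^[m]^[n])⁻¹(E)` cancels to `(f^[m])⁻¹(E) = E`.
Then `f⁻¹` shifts the sets `(f^[i])⁻¹(E)`, `i < m`, by one, and the last one wraps around to `E`.
-/

open Function Set

theorem Function.Surjective.image_eq_of_preimage_eq {α : Type*} {f : α → α} {s : Set α}
    (hf : Surjective f) (h : f ⁻¹' s = s) : f '' s = s := by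
  conv_lhs => rw [← h]
  exact image_preimage_eq s hf

theorem TopologicalSpace.NoetherianSpace.preimage_eq_of_preimage_subset {X : Type*}
    [TopologicalSpace X] [NoetherianSpace X] {g : X → X} (hg_cont : Continuous g)
    (hg_surj : Surjective g) {E : Set X} (hE_cl : IsClosed E) (hE : g ⁻¹' E ⊆ E) :
    g ⁻¹' E = E := by
  let C : ℕ → Closeds X := fun n => ⟨g^[n] ⁻¹' E, hE_cl.preimage (hg_cont.iterate n)⟩
  have hC : Antitone C := antitone_nat_of_succ_le fun n => by
    change g^[n + 1] ⁻¹' E ⊆ g^[n] ⁻¹' E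
    rw [iterate_succ', preimage_comp]
    exact preimage_mono hE
  obtain ⟨n, hn⟩ := WellFoundedLT.antitone_chain_condition hC
  apply (hg_surj.iterate n).preimage_injective
  rw [← preimage_comp, ← iterate_succ']
  exact congrArg SetLike.coe (hn (n + 1) n.le_succ).symm

theorem Function.preimage_biUnion_range_iterate_preimage {α : Type*} {f : α → α} {m : ℕ}
    {s : Set α} (h : f^[m] ⁻¹' s = s) :
    f ⁻¹' (⋃ i ∈ Finset.range m, f^[i] ⁻¹' s) = ⋃ i ∈ Finset.range m, f^[i] ⁻¹' s := by
  cases m with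
  | zero => simp
  | succ m =>
    simp only [Finset.mem_range, preimage_iUnion, ← preimage_comp, ← iterate_succ]
    rw [biUnion_lt_succ (fun i => f^[i + 1] ⁻¹' s), biUnion_lt_succ' (fun i => f^[i] ⁻¹' s),
      h, iterate_zero, preimage_id, union_comm]

theorem stmt_17_general {X : Type*} [TopologicalSpace X] [TopologicalSpace.NoetherianSpace X]
    (f : X → X) (hf_cont : Continuous f) (hf_surj : Function.Surjective f)
    (m : ℕ) (E : Set X) (hE_cl : IsClosed E)
    (hE : f^[m] ⁻¹' E ⊆ E) :
    f^[m] ⁻¹' E = E ∧ f^[m] '' E = E ∧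
    f ⁻¹' (⋃ i ∈ Finset.range m, f^[i] ⁻¹' E) = (⋃ i ∈ Finset.range m, f^[i] ⁻¹' E) ∧
    f '' (⋃ i ∈ Finset.range m, f^[i] ⁻¹' E) = (⋃ i ∈ Finset.range m, f^[i] ⁻¹' E) := by
  have hE_inv : f^[m] ⁻¹' E = E :=
    TopologicalSpace.NoetherianSpace.preimage_eq_of_preimage_subset (hf_cont.iterate m)
      (hf_surj.iterate m) hE_cl hE
  have hU_inv := preimage_biUnion_range_iterate_preimage hE_inv
  exact ⟨hE_inv, (hf_surj.iterate m).image_eq_of_preimage_eq hE_inv, hU_inv,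
    hf_surj.image_eq_of_preimage_eq hU_inv⟩

/-- On a Noetherian topological space, if `E` is closed and `(f^[m])⁻¹(E) ⊆ E` for
a continuous surjective `f` and some `m ≥ 1`, then `(f^[m])⁻¹(E) = E`,
`f^[m](E) = E`, and `Ẽ := ⋃_{i<m} (f^[i])⁻¹(E)` is totally invariant under `f`. -/
theorem stmt_17 {X : Type*} [TopologicalSpace X] [TopologicalSpace.NoetherianSpace X]
    (f : X → X) (hf_cont : Continuous f) (hf_surj : Function.Surjective f)
    (m : ℕ) (hm : 1 ≤ m) (E : Set X) (hE_cl : IsClosed E)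
    (hE : f^[m] ⁻¹' E ⊆ E) :
    f^[m] ⁻¹' E = E ∧ f^[m] '' E = E ∧
    f ⁻¹' (⋃ i ∈ Finset.range m, f^[i] ⁻¹' E) = (⋃ i ∈ Finset.range m, f^[i] ⁻¹' E) ∧
    f '' (⋃ i ∈ Finset.range m, f^[i] ⁻¹' E) = (⋃ i ∈ Finset.range m, f^[i] ⁻¹' E) :=
  stmt_17_general f hf_cont hf_surj m E hE_cl hE
end
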